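/- arXiv:0904.0315 — 4 statements merged into one kernel-verified Lean document; each statement's English description precedes it below -/
import Mathlib

section
/- Let f : ℝ → ℝ solve the power-law ODE on [0,T) (0 < T ≤ ∞). Then the energy function E(t) = (n/(n+1))·|f''(t)|^{n+1} − (m/3)·(f'(t))³ is differentiable on [0,T) and satisfies E'(t) = −α·f(t)·(f''(t))² for every t ∈ [0,T). In particular, E is nonincreasing on any subinterval of [0,T) on which f ≥ 0 (assuming α > 0). -/
/-!
Write `u = f''` and `g = |u|^(n-1) u`, so that the equation reads `g' = m (f')² - α f u`.
Only `g`, not `u`, is known to be differentiable; but `|u|^(n+1) = |g|^((n+1)/n)` and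
`x ↦ |x|^p` is differentiable for `p > 1`, so the chain rule gives
`(|u|^(n+1))' = (n+1)/n · u · g'`. Hence `E' = u g' - m (f')² u = -α f u²`, and the
monotonicity statement is the mean value theorem.
-/

open Real Set Filter Topology

/-- The signed power nonlinearity `x ↦ |x|^(n-1) * x`. -/
noncomputable def powLaw (n x : ℝ) : ℝ := |x| ^ (n - 1) * x

/-- `f` solves the power-law ODE `(|f''|^(n-1) f'')' + α f f'' - m (f')² = 0` on `I`:
`f` is twice continuously differentiable on `I`, `t ↦ |f''(t)|^(n-1) f''(t)` is
differentiable on `I`, and the equation holds on `I`. -/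
def SolvesPowerLawODE (n α m : ℝ) (f : ℝ → ℝ) (I : Set ℝ) : Prop :=
  (∀ t ∈ I, DifferentiableAt ℝ f t) ∧
  (∀ t ∈ I, DifferentiableAt ℝ (deriv f) t) ∧
  ContinuousOn (deriv (deriv f)) I ∧
  (∀ t ∈ I, DifferentiableAt ℝ (fun s => powLaw n (deriv (deriv f) s)) t) ∧
  (∀ t ∈ I, deriv (fun s => powLaw n (deriv (deriv f) s)) t
      + α * f t * deriv (deriv f) t - m * (deriv f t) ^ 2 = 0)

noncomputable def powLawEnergy (n m : ℝ) (f : ℝ → ℝ) (s : ℝ) : ℝ :=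
  n / (n + 1) * |deriv (deriv f) s| ^ (n + 1) - m / 3 * (deriv f s) ^ 3

section powLaw

variable {n : ℝ}

lemma abs_powLaw (hn : n ≠ 0) (y : ℝ) : |powLaw n y| = |y| ^ n := by
  rcases eq_or_ne y 0 with rfl | hy
  · simp [powLaw, Real.zero_rpow hn]
  · rw [powLaw, abs_mul, abs_of_nonneg (Real.rpow_nonneg (abs_nonneg y) _),
      ← Real.rpow_add_one (abs_pos.2 hy).ne', sub_add_cancel]

lemma abs_powLaw_rpow (hn : n ≠ 0) (y : ℝ) :
    |powLaw n y| ^ ((n + 1) / n) = |y| ^ (n + 1) := by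
  rw [abs_powLaw hn, ← Real.rpow_mul (abs_nonneg y), mul_div_cancel₀ _ hn]

lemma abs_powLaw_rpow_mul_powLaw (hn : n ≠ 0) (y : ℝ) :
    |powLaw n y| ^ (1 / n - 1) * powLaw n y = y := by
  rcases eq_or_ne y 0 with rfl | hy
  · simp [powLaw]
  · have hy' : 0 < |y| := abs_pos.2 hy
    rw [abs_powLaw hn, ← Real.rpow_mul hy'.le, powLaw, ← mul_assoc,
      ← Real.rpow_add hy', mul_sub, mul_one_div_cancel hn]
    simp

lemma HasDerivAt.abs_rpow_add_one_of_powLaw (hn : 0 < n) {u : ℝ → ℝ} {g' t : ℝ}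
    (hg : HasDerivAt (fun s => powLaw n (u s)) g' t) :
    HasDerivAt (fun s => |u s| ^ (n + 1)) ((n + 1) / n * u t * g') t := by
  have hp : 1 < (n + 1) / n := by rw [lt_div_iff₀ hn]; linarith
  have h := (hasDerivAt_abs_rpow (powLaw n (u t)) hp).comp t hg
  simp only [Function.comp_def, abs_powLaw_rpow hn.ne'] at h
  rwa [show (n + 1) / n - 2 = 1 / n - 1 by field_simp; ring, mul_assoc ((n + 1) / n),
    abs_powLaw_rpow_mul_powLaw hn.ne'] at h

end powLaw

namespace SolvesPowerLawODE

variable {n α m : ℝ} {f : ℝ → ℝ} {I : Set ℝ}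

lemma hasDerivAt_energy (hf : SolvesPowerLawODE n α m f I) (hn : 0 < n) {t : ℝ} (ht : t ∈ I) :
    HasDerivAt (powLawEnergy n m f) (-α * f t * (deriv (deriv f) t) ^ 2) t := by
  obtain ⟨-, hf', -, hg, hode⟩ := hf
  have hpow := (hg t ht).hasDerivAt.abs_rpow_add_one_of_powLaw hn
  have hcube := ((hf' t ht).hasDerivAt.fun_pow 3).const_mul (m / 3)
  have hcancel : n / (n + 1) * ((n + 1) / n) = 1 := by
    field_simp [hn.ne', show n + 1 ≠ 0 by linarith]
  refine ((hpow.const_mul (n / (n + 1))).fun_sub hcube).congr_deriv ?_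
  linear_combination deriv (deriv f) t * (hode t ht)
    + deriv (deriv f) t * deriv (fun s => powLaw n (deriv (deriv f) s)) t * hcancel

lemma antitoneOn_energy (hf : SolvesPowerLawODE n α m f I) (hn : 0 < n) (hα : 0 ≤ α)
    {a b : ℝ} (hab : Icc a b ⊆ I) (hf₀ : ∀ s ∈ Icc a b, 0 ≤ f s) :
    AntitoneOn (powLawEnergy n m f) (Icc a b) := by
  have hE : ∀ s ∈ Icc a b, HasDerivAt (powLawEnergy n m f) _ s :=
    fun s hs => hf.hasDerivAt_energy hn (hab hs)
  refine antitoneOn_of_hasDerivWithinAt_nonpos (convex_Icc a b)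
    (fun s hs => (hE s hs).continuousAt.continuousWithinAt)
    (fun s hs => (hE s (interior_subset hs)).hasDerivWithinAt) fun s hs => ?_
  have := mul_nonneg (mul_nonneg hα (hf₀ s (interior_subset hs))) (sq_nonneg (deriv (deriv f) s))
  linarith

end SolvesPowerLawODE

theorem stmt_1_general (n α m : ℝ) (hn : 1 < n) (T : EReal)
    (f : ℝ → ℝ)
    (hf : SolvesPowerLawODE n α m f {t : ℝ | 0 ≤ t ∧ (t : EReal) < T}) :
    (∀ t : ℝ, 0 ≤ t → (t : EReal) < T →
      HasDerivWithinAt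
        (fun s => n / (n + 1) * |deriv (deriv f) s| ^ (n + 1) - m / 3 * (deriv f s) ^ 3)
        (-α * f t * (deriv (deriv f) t) ^ 2)
        {t : ℝ | 0 ≤ t ∧ (t : EReal) < T} t) ∧
    (0 < α → ∀ t₁ t₂ : ℝ, 0 ≤ t₁ → (t₁ : EReal) < T → 0 ≤ t₂ → (t₂ : EReal) < T →
      t₁ ≤ t₂ → (∀ s ∈ Set.Icc t₁ t₂, 0 ≤ f s) →
      n / (n + 1) * |deriv (deriv f) t₂| ^ (n + 1) - m / 3 * (deriv f t₂) ^ 3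
        ≤ n / (n + 1) * |deriv (deriv f) t₁| ^ (n + 1) - m / 3 * (deriv f t₁) ^ 3) := by
  have hn₀ : 0 < n := by linarith
  refine ⟨fun t ht₀ htT => (hf.hasDerivAt_energy hn₀ ⟨ht₀, htT⟩).hasDerivWithinAt, ?_⟩
  intro hα t₁ t₂ ht₁ _ _ ht₂ h₁₂ hf₀
  have hsub : Icc t₁ t₂ ⊆ {t : ℝ | 0 ≤ t ∧ (t : EReal) < T} := fun s hs =>
    ⟨ht₁.trans hs.1, (EReal.coe_le_coe_iff.2 hs.2).trans_lt ht₂⟩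
  exact hf.antitoneOn_energy hn₀ hα.le hsub hf₀ (left_mem_Icc.2 h₁₂) (right_mem_Icc.2 h₁₂) h₁₂

theorem stmt_1 (n α m : ℝ) (hn : 1 < n) (T : EReal) (hT : 0 < T)
    (f : ℝ → ℝ)
    (hf : SolvesPowerLawODE n α m f {t : ℝ | 0 ≤ t ∧ (t : EReal) < T}) :
    (∀ t : ℝ, 0 ≤ t → (t : EReal) < T →
      HasDerivWithinAt
        (fun s => n / (n + 1) * |deriv (deriv f) s| ^ (n + 1) - m / 3 * (deriv f s) ^ 3)
        (-α * f t * (deriv (deriv f) t) ^ 2)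
        {t : ℝ | 0 ≤ t ∧ (t : EReal) < T} t) ∧
    (0 < α → ∀ t₁ t₂ : ℝ, 0 ≤ t₁ → (t₁ : EReal) < T → 0 ≤ t₂ → (t₂ : EReal) < T →
      t₁ ≤ t₂ → (∀ s ∈ Set.Icc t₁ t₂, 0 ≤ f s) →
      n / (n + 1) * |deriv (deriv f) t₂| ^ (n + 1) - m / 3 * (deriv f t₂) ^ 3
        ≤ n / (n + 1) * |deriv (deriv f) t₁| ^ (n + 1) - m / 3 * (deriv f t₁) ^ 3) :=
  stmt_1_general n α m hn T f hf
end

section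
/- Assume α > 0 and −α < m < 0. Let f : ℝ → ℝ solve the power-law ODE on [0,T) with f'(0) = b ≥ 0, and suppose there exists t₀ ∈ (0,T) such that f''(t) > 0 for all t ∈ (0,t₀) and f''(t₀) = 0. Then f is three times differentiable on (0,t₀) and the third derivative f''' is unbounded on (0,t₀); in particular f is not a classical C³ solution up to t₀. -/
open Real Set Filter Topology

/-!
Where `f'' > 0`, the flux `g = |f''|^(n-1) f''` equals `(f'')^n`, so `f''` is differentiable
there and `g' = n (f'')^(n-1) f'''`. As `t → t₀⁻`, the ODE gives
`g' → m f'(t₀)² - α f(t₀) f''(t₀) = m f'(t₀)² < 0`, since `f'` increased strictly from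
`f'(0) ≥ 0`. But the factor `n (f'')^(n-1)` tends to `0` because `n > 1`, so `f'''` must blow up.
-/

lemma powLaw_of_pos {n x : ℝ} (hx : 0 < x) : powLaw n x = x ^ n := by
  rw [powLaw, abs_of_pos hx, rpow_sub_one hx.ne', div_mul_cancel₀ _ hx.ne']

section PositiveFlux

variable {n : ℝ} {u : ℝ → ℝ} {t : ℝ}

/-- Inverting `x ↦ x ^ n` on `(0, ∞)`. -/
lemma differentiableAt_of_powLaw_comp (hn : n ≠ 0) (hu : ∀ᶠ s in 𝓝 t, 0 < u s)
    (hg : DifferentiableAt ℝ (fun s => powLaw n (u s)) t) : DifferentiableAt ℝ u t := by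
  have hg_eq : (fun s => powLaw n (u s)) =ᶠ[𝓝 t] fun s => u s ^ n :=
    hu.mono fun s hs => powLaw_of_pos hs
  have hu_eq : u =ᶠ[𝓝 t] fun s => (u s ^ n) ^ n⁻¹ :=
    hu.mono fun s hs => by dsimp only; rw [← rpow_mul hs.le, mul_inv_cancel₀ hn, rpow_one]
  refine DifferentiableAt.congr_of_eventuallyEq ?_ hu_eq
  exact (hg.congr_of_eventuallyEq hg_eq.symm).rpow_const
    (Or.inl (rpow_pos_of_pos hu.self_of_nhds n).ne')

lemma HasDerivAt.powLaw_comp {u' : ℝ} (hu : HasDerivAt u u' t) (ht : 0 < u t) :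
    HasDerivAt (fun s => powLaw n (u s)) (u' * n * u t ^ (n - 1)) t := by
  have hpos : ∀ᶠ s in 𝓝 t, 0 < u s :=
    hu.continuousAt.eventually (eventually_gt_nhds ht)
  exact (hu.rpow_const (Or.inl ht.ne')).congr_of_eventuallyEq
    (hpos.mono fun s hs => powLaw_of_pos hs)

end PositiveFlux

namespace SolvesPowerLawODE

variable {n α m : ℝ} {f : ℝ → ℝ} {I : Set ℝ} {t : ℝ}

lemma differentiableAt_deriv_deriv (hf : SolvesPowerLawODE n α m f I) (hn : n ≠ 0)
    (ht : t ∈ I) (hpos : ∀ᶠ s in 𝓝 t, 0 < deriv (deriv f) s) :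
    DifferentiableAt ℝ (deriv (deriv f)) t :=
  differentiableAt_of_powLaw_comp hn hpos (hf.2.2.2.1 t ht)

lemma classical_form (hf : SolvesPowerLawODE n α m f I) (hn : n ≠ 0) (ht : t ∈ I)
    (hpos : ∀ᶠ s in 𝓝 t, 0 < deriv (deriv f) s) :
    n * deriv (deriv f) t ^ (n - 1) * deriv (deriv (deriv f)) t
      = m * deriv f t ^ 2 - α * f t * deriv (deriv f) t := by
  have hflux := ((hf.differentiableAt_deriv_deriv hn ht hpos).hasDerivAt.powLaw_comp
    (n := n) hpos.self_of_nhds).deriv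
  have hode := hf.2.2.2.2 t ht
  rw [hflux] at hode
  linarith

end SolvesPowerLawODE

lemma tendsto_abs_atTop_of_mul_tendsto {ι : Type*} {l : Filter ι} {a b : ι → ℝ} {L : ℝ}
    (hL : L ≠ 0) (ha : Tendsto a l (𝓝 0)) (ha_pos : ∀ᶠ i in l, 0 < a i)
    (hab : Tendsto (fun i => a i * b i) l (𝓝 L)) : Tendsto (fun i => |b i|) l atTop := by
  have ha_inv : Tendsto (fun i => (a i)⁻¹) l atTop :=
    tendsto_inv_nhdsGT_zero.comp (tendsto_nhdsWithin_iff.2 ⟨ha, ha_pos⟩)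
  refine ((hab.abs.pos_mul_atTop (abs_pos.2 hL) ha_inv)).congr' ?_
  filter_upwards [ha_pos] with i hi
  rw [abs_mul, abs_of_pos hi, mul_comm, inv_mul_cancel_left₀ hi.ne']

lemma lt_of_deriv_pos_on_Ioo {g : ℝ → ℝ} {a b : ℝ} (hab : a < b)
    (hg : ContinuousOn g (Icc a b)) (hpos : ∀ t ∈ Ioo a b, 0 < deriv g t) : g a < g b :=
  strictMonoOn_of_deriv_pos (convex_Icc a b) hg (by simpa only [interior_Icc] using hpos)
    (left_mem_Icc.2 hab.le) (right_mem_Icc.2 hab.le) hab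

theorem stmt_3_general (n α m : ℝ) (hn : 1 < n) (hm₂ : m < 0)
    (T : EReal) (f : ℝ → ℝ) (b : ℝ) (hb : 0 ≤ b)
    (hf : SolvesPowerLawODE n α m f {t : ℝ | 0 ≤ t ∧ (t : EReal) < T})
    (hb0 : deriv f 0 = b)
    (t₀ : ℝ) (ht₀ : 0 < t₀) (ht₀T : (t₀ : EReal) < T)
    (hpos : ∀ t ∈ Set.Ioo 0 t₀, 0 < deriv (deriv f) t)
    (hzero : deriv (deriv f) t₀ = 0) :
    (∀ t ∈ Set.Ioo 0 t₀, DifferentiableAt ℝ (deriv (deriv f)) t) ∧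
    (∀ C : ℝ, ∃ t ∈ Set.Ioo 0 t₀, C < |deriv (deriv (deriv f)) t|) := by
  have ⟨hd1, hd2, hc2, _⟩ := hf
  have hIcc : Icc 0 t₀ ⊆ {t : ℝ | 0 ≤ t ∧ (t : EReal) < T} := fun t ht =>
    ⟨ht.1, lt_of_le_of_lt (EReal.coe_le_coe_iff.2 ht.2) ht₀T⟩
  have ht₀I := hIcc (right_mem_Icc.2 ht₀.le)
  have hn0 : n ≠ 0 := by linarith
  have hpos_nhds : ∀ t ∈ Ioo 0 t₀, ∀ᶠ s in 𝓝 t, 0 < deriv (deriv f) s := fun t ht =>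
    eventually_of_mem (isOpen_Ioo.mem_nhds ht) hpos
  refine ⟨fun t ht => hf.differentiableAt_deriv_deriv hn0 (hIcc (Ioo_subset_Icc_self ht))
    (hpos_nhds t ht), fun C => ?_⟩
  have hP : 0 < deriv f t₀ := (hb0 ▸ hb).trans_lt (lt_of_deriv_pos_on_Ioo ht₀
    (fun t ht => (hd2 t (hIcc ht)).continuousAt.continuousWithinAt) hpos)
  have hf'' : Tendsto (deriv (deriv f)) (𝓝[<] t₀) (𝓝 0) :=
    hzero ▸ ((hc2.mono hIcc) t₀ (right_mem_Icc.2 ht₀.le)).tendsto.mono_left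
      (nhdsWithin_le_of_mem (Icc_mem_nhdsLT ht₀))
  have hflux : Tendsto (fun t => m * deriv f t ^ 2 - α * f t * deriv (deriv f) t)
      (𝓝[<] t₀) (𝓝 (m * deriv f t₀ ^ 2)) := by
    have hf' := (hd2 t₀ ht₀I).continuousAt.tendsto.mono_left (nhdsWithin_le_nhds (s := Iio t₀))
    have hf := (hd1 t₀ ht₀I).continuousAt.tendsto.mono_left (nhdsWithin_le_nhds (s := Iio t₀))
    simpa only [mul_zero, sub_zero] using ((hf'.pow 2).const_mul m).sub ((hf.const_mul α).mul hf'')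
  have hfactor : Tendsto (fun t => n * deriv (deriv f) t ^ (n - 1)) (𝓝[<] t₀) (𝓝 0) := by
    simpa [zero_rpow (sub_pos.2 hn).ne'] using
      (hf''.rpow_const (Or.inr (sub_pos.2 hn).le)).const_mul n
  have hIoo : ∀ᶠ t in 𝓝[<] t₀, t ∈ Ioo 0 t₀ := Ioo_mem_nhdsLT ht₀
  have hode_Ioo := hIoo.mono fun t ht =>
    (hf.classical_form hn0 (hIcc (Ioo_subset_Icc_self ht)) (hpos_nhds t ht)).symm
  have hblowup := tendsto_abs_atTop_of_mul_tendsto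
    (mul_ne_zero hm₂.ne (pow_pos hP 2).ne') hfactor
    (hIoo.mono fun t ht => mul_pos (by linarith) (rpow_pos_of_pos (hpos t ht) _))
    (hflux.congr' hode_Ioo)
  exact (hIoo.and (hblowup.eventually_gt_atTop C)).exists

theorem stmt_3 (n α m : ℝ) (hn : 1 < n) (hα : 0 < α) (hm₁ : -α < m) (hm₂ : m < 0)
    (T : EReal) (hT : 0 < T) (f : ℝ → ℝ) (b : ℝ) (hb : 0 ≤ b)
    (hf : SolvesPowerLawODE n α m f {t : ℝ | 0 ≤ t ∧ (t : EReal) < T})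
    (hb0 : deriv f 0 = b)
    (t₀ : ℝ) (ht₀ : 0 < t₀) (ht₀T : (t₀ : EReal) < T)
    (hpos : ∀ t ∈ Set.Ioo 0 t₀, 0 < deriv (deriv f) t)
    (hzero : deriv (deriv f) t₀ = 0) :
    (∀ t ∈ Set.Ioo 0 t₀, DifferentiableAt ℝ (deriv (deriv f)) t) ∧
    (∀ C : ℝ, ∃ t ∈ Set.Ioo 0 t₀, C < |deriv (deriv (deriv f)) t|) :=
  stmt_3_general n α m hn hm₂ T f b hb hf hb0 t₀ ht₀ ht₀T hpos hzero
end

section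
/- Let I ⊆ ℝ be an open interval and let f : ℝ → ℝ be three times differentiable on I with f''(t) > 0 for all t ∈ I, satisfying the classical equation n·(f''(t))^{n−1}·f'''(t) + α·f(t)·f''(t) = m·(f'(t))² on I. Then the function H(t) = f(t)·(f''(t))^n − (1/2)·(f'(t))²·(f''(t))^{n−1} + α·(f(t))²·f'(t) is differentiable on I with H'(t) = f(t)·(f'(t))²·[m + 2α + α(n−1)/(2n)] − (m(n−1)/(2n))·(f'(t))⁴·(f''(t))^{−1} for all t ∈ I. -/
/-!
Differentiating `H` by the product and chain rules, the terms `f' (f'')^n` cancel and `f'''`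
enters only through `(f'')^(n-1) f'''` and `(f'')^(n-2) f'''`. Since `f'' ≠ 0`, the equation
expresses `n (f'')^(n-1) f'''` as `m (f')² - α f f''`, and substituting it gives the closed form.
-/

open Real

section PowerLawEnergy

variable {n α : ℝ}

theorem hasDerivAt_powerLawEnergy {u v w : ℝ → ℝ} {t d : ℝ} (hu : HasDerivAt u (v t) t)
    (hv : HasDerivAt v (w t) t) (hw : HasDerivAt w d t) (hwt : w t ≠ 0) :
    HasDerivAt
      (fun s => u s * w s ^ n - (1 / 2) * v s ^ 2 * w s ^ (n - 1) + α * u s ^ 2 * v s)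
      (u t * (n * w t ^ (n - 1) * d) - (n - 1) / 2 * v t ^ 2 * w t ^ (n - 2) * d
        + 2 * α * u t * v t ^ 2 + α * u t ^ 2 * w t) t := by
  have H := ((hu.fun_mul (hw.rpow_const (p := n) (.inl hwt))).fun_sub
    (((hv.fun_pow 2).const_mul (1 / 2)).fun_mul (hw.rpow_const (p := n - 1) (.inl hwt)))).fun_add
    (((hu.fun_pow 2).const_mul α).fun_mul hv)
  refine H.congr_deriv ?_
  have hpow : w t ^ n = w t ^ (n - 1) * w t := by
    rw [← rpow_add_one hwt]; ring_nf
  rw [hpow, show n - 1 - 1 = n - 2 by ring]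
  ring

variable {m a b c d : ℝ}

theorem powerLawEnergy_deriv_eq (hn : n ≠ 0) (hc : c ≠ 0)
    (hode : n * c ^ (n - 1) * d + α * a * c = m * b ^ 2) :
    a * (n * c ^ (n - 1) * d) - (n - 1) / 2 * b ^ 2 * c ^ (n - 2) * d
        + 2 * α * a * b ^ 2 + α * a ^ 2 * c
      = a * b ^ 2 * (m + 2 * α + α * (n - 1) / (2 * n))
        - (m * (n - 1) / (2 * n)) * b ^ 4 * c⁻¹ := by
  have hpow : c ^ (n - 2) = c ^ (n - 1) / c := by
    rw [show n - 2 = n - 1 - 1 by ring, rpow_sub_one hc]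
  rw [hpow]
  field_simp
  linear_combination (2 * n * a * c - (n - 1) * b ^ 2) * hode

end PowerLawEnergy

theorem stmt_11_general (n α m : ℝ) (hn : 1 < n) (I : Set ℝ)
    (f : ℝ → ℝ)
    (hf1 : ∀ t ∈ I, DifferentiableAt ℝ f t)
    (hf2 : ∀ t ∈ I, DifferentiableAt ℝ (deriv f) t)
    (hf3 : ∀ t ∈ I, DifferentiableAt ℝ (deriv (deriv f)) t)
    (hpos : ∀ t ∈ I, 0 < deriv (deriv f) t)
    (heq : ∀ t ∈ I,
      n * (deriv (deriv f) t) ^ (n - 1) * deriv (deriv (deriv f)) t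
        + α * f t * deriv (deriv f) t = m * (deriv f t) ^ 2) :
    ∀ t ∈ I,
      HasDerivAt
        (fun s => f s * (deriv (deriv f) s) ^ n
          - (1 / 2) * (deriv f s) ^ 2 * (deriv (deriv f) s) ^ (n - 1)
          + α * (f s) ^ 2 * deriv f s)
        (f t * (deriv f t) ^ 2 * (m + 2 * α + α * (n - 1) / (2 * n))
          - (m * (n - 1) / (2 * n)) * (deriv f t) ^ 4 * (deriv (deriv f) t)⁻¹)
        t := by
  intro t ht
  have hc : deriv (deriv f) t ≠ 0 := (hpos t ht).ne'
  exact (hasDerivAt_powerLawEnergy (hf1 t ht).hasDerivAt (hf2 t ht).hasDerivAt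
    (hf3 t ht).hasDerivAt hc).congr_deriv
    (powerLawEnergy_deriv_eq (by linarith) hc (heq t ht))

theorem stmt_11 (n α m : ℝ) (hn : 1 < n) (I : Set ℝ)
    (hI : IsOpen I) (hI' : I.OrdConnected) (f : ℝ → ℝ)
    (hf1 : ∀ t ∈ I, DifferentiableAt ℝ f t)
    (hf2 : ∀ t ∈ I, DifferentiableAt ℝ (deriv f) t)
    (hf3 : ∀ t ∈ I, DifferentiableAt ℝ (deriv (deriv f)) t)
    (hpos : ∀ t ∈ I, 0 < deriv (deriv f) t)
    (heq : ∀ t ∈ I,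
      n * (deriv (deriv f) t) ^ (n - 1) * deriv (deriv (deriv f)) t
        + α * f t * deriv (deriv f) t = m * (deriv f t) ^ 2) :
    ∀ t ∈ I,
      HasDerivAt
        (fun s => f s * (deriv (deriv f) s) ^ n
          - (1 / 2) * (deriv f s) ^ 2 * (deriv (deriv f) s) ^ (n - 1)
          + α * (f s) ^ 2 * deriv f s)
        (f t * (deriv f t) ^ 2 * (m + 2 * α + α * (n - 1) / (2 * n))
          - (m * (n - 1) / (2 * n)) * (deriv f t) ^ 4 * (deriv (deriv f) t)⁻¹)
        t :=
  stmt_11_general n α m hn I f hf1 hf2 hf3 hpos heq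
end

section
/- Assume α > 0 and −2α < m < 0. Let f : ℝ → ℝ solve the power-law ODE on [0,∞) with f(t) > 0 for all t ≥ 0, f(t) → ∞ and f'(t) → 0 as t → ∞. Then there exists t₀ ≥ 0 such that f'(t) > 0 and f''(t) < 0 for all t > t₀. -/
open Real Set Filter Topology

/-! `g = |f''|^(n-1) f''` has the sign of `f''`, and by the equation `g' = m f'² - α f f''`,
which is negative wherever `f'' > 0` (as `α, f > 0` and `m < 0`). Hence once `g` is `≤ 0` it
stays so. Such a point exists: were `f'' > 0` throughout, `f'` would increase to `0`, so
`f' ≤ 0` and `f` could not tend to `∞`. From then on `f` is concave, so `f'` decreases to `0`;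
it is positive, since `f'(t) = 0` would make `f` nonincreasing after `t`. Finally a zero of
`f''` would be a local maximum of `g` with `g' = m f'² < 0`. -/

lemma powLaw_zero (n : ℝ) : powLaw n 0 = 0 := by simp [powLaw]

lemma powLaw_pos_iff {n x : ℝ} : 0 < powLaw n x ↔ 0 < x := by
  refine ⟨fun h => ?_, fun h => mul_pos (rpow_pos_of_pos (abs_pos.mpr h.ne') _) h⟩
  by_contra hx
  exact h.not_ge (mul_nonpos_of_nonneg_of_nonpos (rpow_nonneg (abs_nonneg x) _) (not_lt.mp hx))

lemma powLaw_nonpos_iff {n x : ℝ} : powLaw n x ≤ 0 ↔ x ≤ 0 := by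
  simpa only [not_lt] using powLaw_pos_iff.not

section Ici

variable {u : ℝ → ℝ} {c : ℝ}

lemma monotoneOn_Ici_of_deriv_nonneg (hu : ∀ t ∈ Ici c, DifferentiableAt ℝ u t)
    (hu' : ∀ t, c < t → 0 ≤ deriv u t) : MonotoneOn u (Ici c) :=
  monotoneOn_of_deriv_nonneg (convex_Ici c)
    (fun t ht => (hu t ht).continuousAt.continuousWithinAt)
    (fun t ht => (hu t (interior_subset ht)).differentiableWithinAt)
    (fun t ht => hu' t (by rwa [interior_Ici] at ht))

lemma antitoneOn_Ici_of_deriv_nonpos (hu : ∀ t ∈ Ici c, DifferentiableAt ℝ u t)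
    (hu' : ∀ t, c < t → deriv u t ≤ 0) : AntitoneOn u (Ici c) :=
  antitoneOn_of_deriv_nonpos (convex_Ici c)
    (fun t ht => (hu t ht).continuousAt.continuousWithinAt)
    (fun t ht => (hu t (interior_subset ht)).differentiableWithinAt)
    (fun t ht => hu' t (by rwa [interior_Ici] at ht))

lemma MonotoneOn.le_of_tendsto_Ici {l : ℝ} (hu : MonotoneOn u (Ici c))
    (hl : Tendsto u atTop (𝓝 l)) {t : ℝ} (ht : c ≤ t) : u t ≤ l :=
  ge_of_tendsto hl <| by
    filter_upwards [eventually_ge_atTop t] with s hs using hu ht (ht.trans hs) hs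

lemma AntitoneOn.le_of_tendsto_Ici {l : ℝ} (hu : AntitoneOn u (Ici c))
    (hl : Tendsto u atTop (𝓝 l)) {t : ℝ} (ht : c ≤ t) : l ≤ u t :=
  le_of_tendsto hl <| by
    filter_upwards [eventually_ge_atTop t] with s hs using hu ht (ht.trans hs) hs

lemma AntitoneOn.not_tendsto_atTop_Ici (hu : AntitoneOn u (Ici c)) :
    ¬Tendsto u atTop atTop := fun h => by
  obtain ⟨s, hgt, hge⟩ := ((h.eventually_gt_atTop (u c)).and (eventually_ge_atTop c)).exists
  exact (hu self_mem_Ici hge hge).not_gt hgt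

lemma nonpos_of_deriv_neg_of_pos (hu : ContinuousOn u (Ici c)) (hc : u c ≤ 0)
    (hu' : ∀ t, c < t → 0 < u t → deriv u t < 0) {b : ℝ} (hb : c ≤ b) : u b ≤ 0 := by
  by_contra! hub
  set S := Icc c b ∩ u ⁻¹' Iic 0
  have hS : IsCompact S := isCompact_Icc.of_isClosed_subset
    ((hu.mono Icc_subset_Ici_self).preimage_isClosed_of_isClosed isClosed_Icc isClosed_Iic)
    inter_subset_left
  obtain ⟨e, heS, hmax⟩ := hS.exists_isGreatest ⟨c, ⟨le_rfl, hb⟩, hc⟩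
  have hpos : ∀ t, e < t → t ≤ b → 0 < u t := fun t het htb => by
    by_contra! h
    exact het.not_ge (hmax ⟨⟨heS.1.1.trans het.le, htb⟩, h⟩)
  have heb : e < b := heS.1.2.lt_of_ne (by rintro rfl; exact heS.2.not_gt hub)
  have hanti : StrictAntiOn u (Icc e b) :=
    strictAntiOn_of_deriv_neg (convex_Icc e b) (hu.mono fun t ht => heS.1.1.trans ht.1)
      fun t ht => by
        rw [interior_Icc] at ht
        exact hu' t (heS.1.1.trans_lt ht.1) (hpos t ht.1 ht.2.le)
  exact (hanti (left_mem_Icc.mpr heb.le) (right_mem_Icc.mpr heb.le) heb).not_ge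
    (heS.2.trans hub.le)

end Ici

section Growth

variable {f : ℝ → ℝ} {c : ℝ} (hf : ∀ t ∈ Ici c, DifferentiableAt ℝ f t)
  (hf' : ∀ t ∈ Ici c, DifferentiableAt ℝ (deriv f) t)
  (hinf : Tendsto f atTop atTop) (hd0 : Tendsto (deriv f) atTop (𝓝 0))
include hf hf' hinf hd0

lemma exists_deriv_deriv_nonpos_of_tendsto : ∃ t, c ≤ t ∧ deriv (deriv f) t ≤ 0 := by
  by_contra! h
  have hf'_le : ∀ t, c ≤ t → deriv f t ≤ 0 := fun t ht =>
    (monotoneOn_Ici_of_deriv_nonneg hf' fun s hs => (h s hs.le).le).le_of_tendsto_Ici hd0 ht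
  exact (antitoneOn_Ici_of_deriv_nonpos hf fun s hs => hf'_le s hs.le).not_tendsto_atTop_Ici hinf

lemma deriv_pos_of_deriv_deriv_nonpos (hf'' : ∀ t, c ≤ t → deriv (deriv f) t ≤ 0) {t : ℝ}
    (ht : c ≤ t) : 0 < deriv f t := by
  have hanti : AntitoneOn (deriv f) (Ici c) :=
    antitoneOn_Ici_of_deriv_nonpos hf' fun s hs => hf'' s hs.le
  refine (hanti.le_of_tendsto_Ici hd0 ht).lt_of_ne fun hzero => ?_
  have hf_anti : AntitoneOn f (Ici t) :=
    antitoneOn_Ici_of_deriv_nonpos (fun s hs => hf s (ht.trans hs)) fun s hs =>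
      hzero ▸ hanti ht (ht.trans hs.le) hs.le
  exact hf_anti.not_tendsto_atTop_Ici hinf

end Growth

namespace SolvesPowerLawODE

variable {n α m : ℝ} {f : ℝ → ℝ}

lemma deriv_powLaw_eq {I : Set ℝ} (hf : SolvesPowerLawODE n α m f I) {t : ℝ} (ht : t ∈ I) :
    deriv (fun s => powLaw n (deriv (deriv f) s)) t
      = m * deriv f t ^ 2 - α * f t * deriv (deriv f) t := by
  linarith [hf.2.2.2.2 t ht]

lemma deriv_deriv_nonpos_of_le {a : ℝ} (hf : SolvesPowerLawODE n α m f (Ici a)) (hα : 0 < α)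
    (hm : m ≤ 0) (hpos : ∀ t, a ≤ t → 0 < f t) {c : ℝ} (hac : a ≤ c)
    (hc : deriv (deriv f) c ≤ 0) {t : ℝ} (hct : c ≤ t) : deriv (deriv f) t ≤ 0 := by
  refine powLaw_nonpos_iff.mp <| nonpos_of_deriv_neg_of_pos (u := fun s => powLaw n _)
    (fun s hs => (hf.2.2.2.1 s (hac.trans hs)).continuousAt.continuousWithinAt)
    (powLaw_nonpos_iff.mpr hc) (fun s hcs hs => ?_) hct
  have has : a ≤ s := hac.trans hcs.le
  rw [hf.deriv_powLaw_eq has]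
  nlinarith [mul_pos (mul_pos hα (hpos s has)) (powLaw_pos_iff.mp hs), sq_nonneg (deriv f s)]

lemma deriv_deriv_neg {I : Set ℝ} (hf : SolvesPowerLawODE n α m f I) (hm : m < 0) {t : ℝ}
    (ht : t ∈ I) (hle : ∀ᶠ s in 𝓝 t, deriv (deriv f) s ≤ 0) (hf't : deriv f t ≠ 0) :
    deriv (deriv f) t < 0 := by
  refine hle.self_of_nhds.lt_of_ne fun hzero => ?_
  have hmax : IsLocalMax (fun s => powLaw n (deriv (deriv f) s)) t := by
    filter_upwards [hle] with s hs
    simpa only [hzero, powLaw_zero] using powLaw_nonpos_iff.mpr hs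
  have hderiv := hmax.deriv_eq_zero
  rw [hf.deriv_powLaw_eq ht, hzero] at hderiv
  nlinarith [mul_neg_of_neg_of_pos hm (sq_pos_of_ne_zero hf't)]

end SolvesPowerLawODE

theorem stmt_12_general (n α m : ℝ) (hα : 0 < α) (hm₂ : m < 0)
    (f : ℝ → ℝ)
    (hf : SolvesPowerLawODE n α m f (Set.Ici 0))
    (hpos : ∀ t : ℝ, 0 ≤ t → 0 < f t)
    (hinf : Filter.Tendsto f Filter.atTop Filter.atTop)
    (hd0 : Filter.Tendsto (deriv f) Filter.atTop (nhds 0)) :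
    ∃ t₀ : ℝ, 0 ≤ t₀ ∧ ∀ t : ℝ, t₀ < t → 0 < deriv f t ∧ deriv (deriv f) t < 0 := by
  obtain ⟨c, hc, hfc⟩ := exists_deriv_deriv_nonpos_of_tendsto hf.1 hf.2.1 hinf hd0
  have hf''_le : ∀ t, c ≤ t → deriv (deriv f) t ≤ 0 := fun t =>
    hf.deriv_deriv_nonpos_of_le hα hm₂.le hpos hc hfc
  have hf'_pos : ∀ t, c ≤ t → 0 < deriv f t := fun t =>
    deriv_pos_of_deriv_deriv_nonpos (fun s hs => hf.1 s (hc.trans hs))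
      (fun s hs => hf.2.1 s (hc.trans hs)) hinf hd0 hf''_le
  refine ⟨c, hc, fun t ht => ⟨hf'_pos t ht.le, hf.deriv_deriv_neg hm₂ (hc.trans ht.le) ?_
    (hf'_pos t ht.le).ne'⟩⟩
  filter_upwards [Ici_mem_nhds ht] with s hs using hf''_le s hs

theorem stmt_12 (n α m : ℝ) (hn : 1 < n) (hα : 0 < α) (hm₁ : -2 * α < m) (hm₂ : m < 0)
    (f : ℝ → ℝ)
    (hf : SolvesPowerLawODE n α m f (Set.Ici 0))
    (hpos : ∀ t : ℝ, 0 ≤ t → 0 < f t)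
    (hinf : Filter.Tendsto f Filter.atTop Filter.atTop)
    (hd0 : Filter.Tendsto (deriv f) Filter.atTop (nhds 0)) :
    ∃ t₀ : ℝ, 0 ≤ t₀ ∧ ∀ t : ℝ, t₀ < t → 0 < deriv f t ∧ deriv (deriv f) t < 0 :=
  stmt_12_general n α m hα hm₂ f hf hpos hinf hd0
end
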